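/- arXiv:1001.1195 — 2 statements merged into one kernel-verified Lean document; each statement's English description precedes it below -/
import Mathlib

section
/- For the random recursive tree on n nodes, the expected proportions c_n(i) of nodes with exactly i children satisfy the recurrence c_n(i) = ((n-2)/n)·c_{n-1}(i) + (1/n)·c_{n-1}(i-1) for all n ≥ 3 and 1 ≤ i ≤ n-1. -/
open Finset

/-- Sample space of a random recursive tree with `m + 1` nodes labelled `0, …, m`:
node `k + 1` attaches by a directed edge from a parent chosen in `{0, …, k}`.
The uniform measure on this product type makes each parent choice independent
and uniform, which is exactly the sequential growth model. -/
def Omega (m : ℕ) : Type := ∀ k : Fin m, Fin (k.val + 1)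

instance (m : ℕ) : Fintype (Omega m) := by unfold Omega; infer_instance

instance (m : ℕ) : Nonempty (Omega m) := by unfold Omega; infer_instance

/-- The number of children of node `v` in the outcome `ω`. -/
def childCount {m : ℕ} (ω : Omega m) (v : ℕ) : ℕ :=
  (Finset.univ.filter (fun k : Fin m => ((ω k).val = v))).card

/-- `C_n(i)`: the number of nodes having exactly `i` children. -/
def numChildEq (m : ℕ) (ω : Omega m) (i : ℕ) : ℕ :=
  ((Finset.range (m + 1)).filter (fun v => childCount ω v = i)).card

/-- The generation (depth) of node `v`: the root `0` has depth `0`, and a node's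
depth is one more than its parent's depth. -/
def depth {m : ℕ} (ω : Omega m) : ℕ → ℕ
  | 0 => 0
  | (j + 1) => if h : j < m then depth ω (ω ⟨j, h⟩).val + 1 else 0
  decreasing_by exact (ω ⟨j, h⟩).isLt

/-- `G_n(j)`: the number of nodes at generation `j`. -/
def numGenEq (m : ℕ) (ω : Omega m) (j : ℕ) : ℕ :=
  ((Finset.range (m + 1)).filter (fun v => depth ω v = j)).card

/-- `L_n(i,j)`: the number of nodes with `i` children lying at generation `j`. -/
def numJointEq (m : ℕ) (ω : Omega m) (i j : ℕ) : ℕ :=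
  ((Finset.range (m + 1)).filter (fun v => childCount ω v = i ∧ depth ω v = j)).card

/-- Expectation with respect to the uniform distribution on `Omega m`. -/
noncomputable def treeExpect (m : ℕ) (f : Omega m → ℝ) : ℝ :=
  (∑ ω : Omega m, f ω) / (Fintype.card (Omega m))

/-- `c_n(i) = E[C_n(i)]/n`, the expected proportion of nodes with `i` children
in the random recursive tree on `n` nodes. -/
noncomputable def c (n i : ℕ) : ℝ :=
  treeExpect (n - 1) (fun ω => (numChildEq (n - 1) ω i : ℝ)) / n

/-- `g_n(j) = E[G_n(j)]/n`, the expected proportion of nodes at generation `j`. -/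
noncomputable def g (n j : ℕ) : ℝ :=
  treeExpect (n - 1) (fun ω => (numGenEq (n - 1) ω j : ℝ)) / n

/-- `p_n(i,j) = E[L_n(i,j)]/n`, the expected proportion of nodes with `i`
children at generation `j`. -/
noncomputable def p (n i j : ℕ) : ℝ :=
  treeExpect (n - 1) (fun ω => (numJointEq (n - 1) ω i j : ℝ)) / n

/-!
Condition on the first `n - 2` parent choices, i.e. on the tree `T_{n-1}`. The last node
attaches to a uniform node `u` among the `n - 1` existing ones: only `u` gains a child, and
the new node is a leaf, which is not counted when `i ≥ 1`. Summing over `u`, the count of nodes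
with `i` children becomes `(n - 1) C_{n-1}(i) - C_{n-1}(i) + C_{n-1}(i - 1)`; taking
expectations and dividing by `n` gives the recurrence.
-/

namespace Omega

def snoc {m : ℕ} (ω : Omega m) (u : Fin (m + 1)) : Omega (m + 1) :=
  Fin.snoc (α := fun k : Fin (m + 1) => Fin (k.val + 1)) ω u

theorem sum_succ {m : ℕ} (f : Omega (m + 1) → ℝ) :
    ∑ ω : Omega (m + 1), f ω = ∑ ω : Omega m, ∑ u : Fin (m + 1), f (ω.snoc u) := by
  unfold Omega
  rw [← (Fin.snocEquiv (fun k : Fin (m + 1) => Fin (k.val + 1))).sum_comp f,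
    Fintype.sum_prod_type, Finset.sum_comm]
  rfl

theorem card_succ (m : ℕ) : Fintype.card (Omega (m + 1)) = (m + 1) * Fintype.card (Omega m) := by
  unfold Omega
  rw [← Fintype.card_congr (Fin.snocEquiv (fun k : Fin (m + 1) => Fin (k.val + 1))),
    Fintype.card_prod, Fintype.card_fin]
  rfl

theorem snoc_castSucc {m : ℕ} (ω : Omega m) (u : Fin (m + 1)) (k : Fin m) :
    ((ω.snoc u k.castSucc : Fin (k.val + 1)) : ℕ) = ω k :=
  congrArg Fin.val (Fin.snoc_castSucc (α := fun k : Fin (m + 1) => Fin (k.val + 1)) u ω k)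

theorem snoc_last {m : ℕ} (ω : Omega m) (u : Fin (m + 1)) :
    ((ω.snoc u (Fin.last m) : Fin (m + 1)) : ℕ) = u :=
  congrArg Fin.val (Fin.snoc_last (α := fun k : Fin (m + 1) => Fin (k.val + 1)) u ω)

end Omega

theorem treeExpect_succ {m : ℕ} (f : Omega (m + 1) → ℝ) :
    treeExpect (m + 1) f = treeExpect m (fun ω => (∑ u, f (ω.snoc u)) / (m + 1)) := by
  unfold treeExpect
  rw [Omega.sum_succ, Omega.card_succ, ← Finset.sum_div]
  push_cast
  rw [div_div, mul_comm]

theorem childCount_snoc {m : ℕ} (ω : Omega m) (u : Fin (m + 1)) (v : ℕ) :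
    childCount (ω.snoc u) v = childCount ω v + if u.val = v then 1 else 0 := by
  rw [childCount, childCount, Finset.card_filter, Finset.card_filter, Fin.sum_univ_castSucc]
  simp only [Omega.snoc_castSucc, Omega.snoc_last]

theorem childCount_self {m : ℕ} (ω : Omega m) : childCount ω m = 0 := by
  rw [childCount, Finset.card_eq_zero, Finset.filter_eq_empty_iff]
  exact fun k _ => ((ω k).isLt.trans_le k.isLt).ne

theorem numChildEq_snoc {m i : ℕ} (hi : i ≠ 0) (ω : Omega m) (u : Fin (m + 1)) :
    (numChildEq (m + 1) (ω.snoc u) i : ℝ) = numChildEq m ω i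
      - (if childCount ω u = i then 1 else 0) + (if childCount ω u = i - 1 then 1 else 0) := by
  have hpt : ∀ v, (if childCount (ω.snoc u) v = i then (1 : ℝ) else 0)
      = (if childCount ω v = i then 1 else 0) + if u.val = v then
        (if childCount ω v = i - 1 then 1 else 0) - (if childCount ω v = i then 1 else 0)
        else 0 := by
    intro v
    rw [childCount_snoc]
    by_cases h : u.val = v
    · have : childCount ω v + 1 = i ↔ childCount ω v = i - 1 := by omega
      simp [h, this]
    · simp [h]
  rw [numChildEq, numChildEq, Finset.natCast_card_filter, Finset.natCast_card_filter,
    Finset.sum_range_succ, childCount_self, if_neg hi.symm, add_zero,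
    Finset.sum_congr rfl fun v _ => hpt v, Finset.sum_add_distrib, Finset.sum_ite_eq,
    if_pos (Finset.mem_range.2 u.isLt)]
  ring

theorem sum_numChildEq_snoc {m i : ℕ} (hi : i ≠ 0) (ω : Omega m) :
    ∑ u, (numChildEq (m + 1) (ω.snoc u) i : ℝ)
      = m * numChildEq m ω i + numChildEq m ω (i - 1) := by
  have hcount : ∀ j, ∑ u : Fin (m + 1), (if childCount ω u = j then (1 : ℝ) else 0)
      = numChildEq m ω j := fun j => by
    rw [numChildEq, Finset.natCast_card_filter,
      Fin.sum_univ_eq_sum_range (fun v => if childCount ω v = j then (1 : ℝ) else 0)]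
  simp only [numChildEq_snoc hi, Finset.sum_add_distrib, Finset.sum_sub_distrib, hcount,
    Finset.sum_const, Finset.card_univ, Fintype.card_fin, nsmul_eq_mul]
  push_cast
  ring

theorem c_succ (m i : ℕ) :
    c (m + 1) i = treeExpect m (fun ω => (numChildEq m ω i : ℝ)) / (m + 1) := by
  rw [c, Nat.add_sub_cancel]
  push_cast
  rfl

theorem children_recurrence_general (n i : ℕ) (hn : 3 ≤ n) (hi1 : 1 ≤ i) :
    c n i = (((n : ℝ) - 2) / n) * c (n - 1) i + (1 / n) * c (n - 1) (i - 1) := by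
  obtain ⟨m, rfl⟩ : ∃ m, n = m + 2 := ⟨n - 2, by omega⟩
  rw [show m + 2 - 1 = m + 1 from rfl, c_succ, c_succ, c_succ, treeExpect_succ]
  simp only [sum_numChildEq_snoc (by omega : i ≠ 0), treeExpect, ← Finset.sum_div,
    Finset.sum_add_distrib, ← Finset.mul_sum]
  push_cast
  field_simp
  ring

/-- the expected proportions `c_n(i)` of nodes with exactly `i`
children in the random recursive tree satisfy
`c_n(i) = ((n-2)/n)·c_{n-1}(i) + (1/n)·c_{n-1}(i-1)` for `n ≥ 3`, `1 ≤ i ≤ n-1`. -/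
theorem children_recurrence (n i : ℕ) (hn : 3 ≤ n) (hi1 : 1 ≤ i) (hi2 : i ≤ n - 1) :
    c n i = (((n : ℝ) - 2) / n) * c (n - 1) i + (1 / n) * c (n - 1) (i - 1) :=
  children_recurrence_general n i hn hi1
end

section
/- In a random recursive tree on n ≥ 1 nodes, the variance of the number of children of a uniformly chosen node equals Var_n[C] = 2 − (n−1)/n² − 2H_n/n, where H_n = Σ_{i=1}^{n} 1/i. -/
open Finset

/-- The `n`-th harmonic number `H_n = Σ_{i=1}^n 1/i`. -/
noncomputable def harmonicR (n : ℕ) : ℝ := ∑ i ∈ Finset.range n, (1 : ℝ) / (i + 1)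

/-! Since a tree with `m + 1` nodes has `m` edges, the weights `c (m + 1) i` have total mass `1`
and mean `m / (m + 1)`, so the variance is `E[Σ_v C_v²] / (m + 1) - (m / (m + 1))²`, where `C_v`
is the number of children of node `v`. Attaching a new node to a uniform parent `x` raises
`Σ_v C_v²` by `2 C_x + 1`, which averages to `2 m / (m + 1) + 1`; summing these increments gives
`E[Σ_v C_v²] = 3 m - 2 H_m`. -/

theorem Finset.sum_sub_sq_mul {ι : Type*} (s : Finset ι) (x w : ι → ℝ) (μ : ℝ) :
    ∑ i ∈ s, (x i - μ) ^ 2 * w i =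
      ∑ i ∈ s, x i ^ 2 * w i - 2 * μ * ∑ i ∈ s, x i * w i + μ ^ 2 * ∑ i ∈ s, w i := by
  have expand (i : ι) :
      (x i - μ) ^ 2 * w i = x i ^ 2 * w i - 2 * μ * (x i * w i) + μ ^ 2 * w i := by
    ring
  simp only [expand, Finset.sum_add_distrib, Finset.sum_sub_distrib, Finset.mul_sum]

theorem harmonicR_succ (m : ℕ) : harmonicR (m + 1) = harmonicR m + 1 / (m + 1) := by
  rw [harmonicR, harmonicR, Finset.sum_range_succ]

def Omega.snocEquiv (m : ℕ) : Fin (m + 1) × Omega m ≃ Omega (m + 1) :=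
  Fin.snocEquiv (fun k : Fin (m + 1) => Fin (k.val + 1))

theorem Omega.snocEquiv_castSucc {m : ℕ} (x : Fin (m + 1)) (ω : Omega m) (k : Fin m) :
    (Omega.snocEquiv m (x, ω) k.castSucc : ℕ) = ω k :=
  congrArg Fin.val (Fin.snoc_castSucc (α := fun k : Fin (m + 1) => Fin (k.val + 1)) ..)

theorem Omega.snocEquiv_last {m : ℕ} (x : Fin (m + 1)) (ω : Omega m) :
    (Omega.snocEquiv m (x, ω) (Fin.last m) : ℕ) = x :=
  congrArg Fin.val (Fin.snoc_last (α := fun k : Fin (m + 1) => Fin (k.val + 1)) ..)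

theorem Omega.sum_univ_succ {M : Type*} [AddCommMonoid M] {m : ℕ} (F : Omega (m + 1) → M) :
    ∑ ω, F ω = ∑ ω : Omega m, ∑ x : Fin (m + 1), F (Omega.snocEquiv m (x, ω)) := by
  rw [← (Omega.snocEquiv m).sum_comp, Fintype.sum_prod_type, Finset.sum_comm]

theorem Omega.card_succ_s6 (m : ℕ) :
    Fintype.card (Omega (m + 1)) = (m + 1) * Fintype.card (Omega m) := by
  rw [← Fintype.card_congr (Omega.snocEquiv m), Fintype.card_prod, Fintype.card_fin]

theorem childCount_snocEquiv {m : ℕ} (x : Fin (m + 1)) (ω : Omega m) (v : ℕ) :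
    childCount (Omega.snocEquiv m (x, ω)) v = childCount ω v + if x.val = v then 1 else 0 := by
  rw [childCount, childCount, Finset.card_filter, Finset.card_filter, Fin.sum_univ_castSucc]
  simp only [Omega.snocEquiv_castSucc, Omega.snocEquiv_last]

theorem childCount_le {m : ℕ} (ω : Omega m) (v : ℕ) : childCount ω v ≤ m :=
  (Finset.card_filter_le _ _).trans_eq (Finset.card_fin m)

theorem childCount_eq_zero_of_le {m v : ℕ} (ω : Omega m) (hv : m ≤ v) : childCount ω v = 0 :=
  Finset.card_eq_zero.2 <| Finset.filter_eq_empty_iff.2 fun k _ => by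
    have := (ω k).isLt
    omega

theorem sum_childCount {m : ℕ} (ω : Omega m) :
    ∑ v ∈ Finset.range (m + 1), childCount ω v = m := by
  induction m with
  | zero => simp [childCount_eq_zero_of_le]
  | succ m ih =>
    obtain ⟨⟨x, ω⟩, rfl⟩ := (Omega.snocEquiv m).surjective ω
    rw [Finset.sum_range_succ, childCount_eq_zero_of_le _ le_rfl]
    simp only [childCount_snocEquiv, Finset.sum_add_distrib, ih, Finset.sum_ite_eq,
      Finset.mem_range, x.isLt, if_true]

theorem sum_childCount_sq_snocEquiv {m : ℕ} (x : Fin (m + 1)) (ω : Omega m) :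
    ∑ v ∈ Finset.range (m + 2), childCount (Omega.snocEquiv m (x, ω)) v ^ 2 =
      ∑ v ∈ Finset.range (m + 1), childCount ω v ^ 2 + 2 * childCount ω x + 1 := by
  rw [Finset.sum_range_succ, childCount_eq_zero_of_le _ le_rfl]
  simp only [childCount_snocEquiv, add_sq, Finset.sum_add_distrib]
  simp [x.isLt]

theorem sum_sum_childCount_sq (m : ℕ) :
    ∑ ω : Omega m, ∑ v ∈ Finset.range (m + 1), (childCount ω v : ℝ) ^ 2 =
      Fintype.card (Omega m) * (3 * m - 2 * harmonicR m) := by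
  induction m with
  | zero => simp [childCount_eq_zero_of_le, harmonicR]
  | succ m ih =>
    have step (ω : Omega m) :
        ∑ x : Fin (m + 1), ∑ v ∈ Finset.range (m + 2),
            childCount (Omega.snocEquiv m (x, ω)) v ^ 2 =
          (m + 1) * ∑ v ∈ Finset.range (m + 1), childCount ω v ^ 2 + (3 * m + 1) := by
      simp only [sum_childCount_sq_snocEquiv, Finset.sum_add_distrib, ← Finset.mul_sum,
        Finset.sum_const, Finset.card_univ, Fintype.card_fin, smul_eq_mul]
      rw [Fin.sum_univ_eq_sum_range (childCount ω), sum_childCount]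
      ring
    have step_real (ω : Omega m) := congrArg (Nat.cast (R := ℝ)) (step ω)
    push_cast at step_real
    rw [Omega.sum_univ_succ, Finset.sum_congr rfl fun ω _ => step_real ω, Finset.sum_add_distrib,
      ← Finset.mul_sum, ih, Omega.card_succ_s6, harmonicR_succ]
    simp only [Finset.sum_const, Finset.card_univ, nsmul_eq_mul]
    push_cast
    field_simp
    ring

theorem sum_mul_c (m : ℕ) (f : ℕ → ℝ) :
    ∑ i ∈ Finset.range (m + 1), f i * c (m + 1) i =
      (∑ ω : Omega m, ∑ v ∈ Finset.range (m + 1), f (childCount ω v)) /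
        (Fintype.card (Omega m) * (m + 1)) := by
  have fiberwise (ω : Omega m) :
      ∑ v ∈ Finset.range (m + 1), f (childCount ω v) =
        ∑ i ∈ Finset.range (m + 1), f i * numChildEq m ω i := by
    rw [← Finset.sum_fiberwise_of_maps_to (g := fun v => childCount ω v)
      fun v _ => Finset.mem_range.2 (Nat.lt_succ_of_le (childCount_le ω v))]
    refine Finset.sum_congr rfl fun i _ => ?_
    rw [Finset.sum_congr rfl fun v hv => congrArg f (Finset.mem_filter.1 hv).2, Finset.sum_const,
      nsmul_eq_mul, numChildEq, mul_comm]
  simp only [c, treeExpect, fiberwise, Finset.sum_comm (s := Finset.univ), Finset.mul_sum,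
    Finset.sum_div, div_div, mul_div_assoc]
  push_cast
  rfl

/-- in the random recursive tree on `n ≥ 1` nodes, the variance of
the number of children of a uniformly chosen node is
`Var_n[C] = 2 − (n−1)/n² − 2H_n/n`, where `E_n[C] = Σ_i i·c_n(i)` and
`Var_n[C] = Σ_i (i − E_n[C])²·c_n(i)`. -/
theorem variance_children (n : ℕ) (hn : 1 ≤ n) :
    ∑ i ∈ Finset.range n,
        ((i : ℝ) - ∑ i' ∈ Finset.range n, (i' : ℝ) * c n i') ^ 2 * c n i =
      2 - ((n : ℝ) - 1) / (n : ℝ) ^ 2 - 2 * harmonicR n / n := by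
  obtain ⟨m, rfl⟩ : ∃ m, n = m + 1 := ⟨n - 1, by omega⟩
  have hcard : (Fintype.card (Omega m) : ℝ) ≠ 0 := Nat.cast_ne_zero.2 Fintype.card_ne_zero
  have mass : ∑ i ∈ Finset.range (m + 1), c (m + 1) i = 1 := by
    have h := sum_mul_c m 1
    simp only [Pi.one_apply, one_mul, Finset.sum_const, Finset.card_range, Finset.card_univ,
      nsmul_eq_mul, mul_one] at h
    rw [h, Nat.cast_succ, div_self (mul_ne_zero hcard (by positivity))]
  have mean : ∑ i ∈ Finset.range (m + 1), (i : ℝ) * c (m + 1) i = m / (m + 1) := by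
    have edges (ω : Omega m) : ∑ v ∈ Finset.range (m + 1), (childCount ω v : ℝ) = m := by
      exact_mod_cast sum_childCount ω
    rw [sum_mul_c m Nat.cast, Finset.sum_congr rfl fun ω _ => edges ω, Finset.sum_const,
      Finset.card_univ, nsmul_eq_mul, mul_div_mul_left _ _ hcard]
  have second_moment :
      ∑ i ∈ Finset.range (m + 1), (i : ℝ) ^ 2 * c (m + 1) i =
        (3 * m - 2 * harmonicR m) / (m + 1) := by
    rw [sum_mul_c m (fun i => (i : ℝ) ^ 2), sum_sum_childCount_sq, mul_div_mul_left _ _ hcard]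
  rw [Finset.sum_sub_sq_mul, mean, mass, second_moment, harmonicR_succ]
  push_cast
  field_simp
  ring
end
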